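/- For every integer k ≥ 1, the sequence a_n = f_{2^k,n}(−1) satisfies the linear recurrence with characteristic polynomial g_k(x) = (x−1)^{2^k} + 1; that is, ∑_{ν=0}^{2^k} (−1)^ν C(2^k,ν) a_{n+2^k−ν} = −a_n for all n ≥ 0, with initial values a_n = 2^n for 0 ≤ n ≤ 2^k − 1. -/

import Mathlib

/-!
Write `ε j = (-1) ^ C(j, 2^k)`, so that `a` is the binomial transform of `ε`. The `m`-th forward
difference of a binomial transform is the binomial transform of `ε` shifted by `m`, and the
left-hand side of the recurrence is the `2^k`-th forward difference of `a`. Comparing coefficients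
of `X^(2^k)` in `(X + 1)^(j + 2^k) = (X + 1)^j (X^(2^k) + 1)` over `ZMod 2` shows that
`C(j + 2^k, 2^k)` and `C(j, 2^k)` have opposite parity, so shifting `ε` by `2^k` negates it.
The initial values hold because `C(j, 2^k) = 0` for `j < 2^k`.
-/

open Finset Polynomial fwdDiff

section BinomialTransform

variable {R : Type*} [Ring R]

def binomialTransform (ε : ℕ → R) (n : ℕ) : R :=
  ∑ j ∈ range (n + 1), (n.choose j : R) * ε j

lemma binomialTransform_succ (ε : ℕ → R) (n : ℕ) :
    binomialTransform ε (n + 1) =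
      binomialTransform (fun j ↦ ε (j + 1)) n + binomialTransform ε n := by
  have hshift : binomialTransform ε n =
      ∑ j ∈ range (n + 1), (n.choose (j + 1) : R) * ε (j + 1) + ε 0 := by
    rw [binomialTransform, sum_range_succ', sum_range_succ, Nat.choose_succ_self]
    simp
  rw [hshift, binomialTransform, binomialTransform, sum_range_succ']
  simp only [Nat.choose_succ_succ', Nat.cast_add, add_mul, sum_add_distrib, Nat.choose_zero_right,
    Nat.cast_one, one_mul, add_assoc]

lemma fwdDiff_binomialTransform (ε : ℕ → R) :
    Δ_[1] (binomialTransform ε) = binomialTransform (fun j ↦ ε (j + 1)) := by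
  ext n
  simp [fwdDiff, binomialTransform_succ]

lemma fwdDiff_iter_binomialTransform (ε : ℕ → R) (m : ℕ) :
    (Δ_[1])^[m] (binomialTransform ε) = binomialTransform (fun j ↦ ε (j + m)) := by
  induction m generalizing ε with
  | zero => rfl
  | succ m ih =>
    rw [Function.iterate_succ_apply, fwdDiff_binomialTransform, ih]
    simp only [add_assoc]

end BinomialTransform

lemma fwdDiff_iter_eq_sum_reflect {R : Type*} [Ring R] (f : ℕ → R) (m n : ℕ) :
    (Δ_[1])^[m] f n = ∑ ν ∈ range (m + 1), (-1 : R) ^ ν * (m.choose ν : R) * f (n + m - ν) := by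
  rw [fwdDiff_iter_eq_sum_shift, ← sum_range_reflect]
  refine sum_congr rfl fun ν hν_mem ↦ ?_
  have hν : ν ≤ m := Nat.lt_succ_iff.mp (mem_range.mp hν_mem)
  rw [Nat.add_sub_cancel, Nat.sub_sub_self hν, Nat.choose_symm hν, smul_eq_mul, mul_one,
    zsmul_eq_mul, show n + (m - ν) = n + m - ν by omega]
  norm_cast

lemma Nat.choose_add_prime_pow_self (p : ℕ) [Fact p.Prime] (j k : ℕ) :
    ((j + p ^ k).choose (p ^ k) : ZMod p) = j.choose (p ^ k) + 1 := by
  have hfrob : ((X + 1 : (ZMod p)[X]) ^ (j + p ^ k)) = (X + 1) ^ j * X ^ p ^ k + (X + 1) ^ j := by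
    rw [pow_add, add_pow_char_pow, one_pow, mul_add, mul_one]
  simpa only [coeff_X_add_one_pow, coeff_mul_X_pow', le_refl, if_true, Nat.sub_self, coeff_add,
    Nat.choose_zero_right, Nat.cast_one, add_comm (1 : ZMod p)] using congrArg (coeff · (p ^ k)) hfrob

lemma neg_one_pow_choose_add_two_pow (j k : ℕ) :
    (-1 : ℤ) ^ ((j + 2 ^ k).choose (2 ^ k)) = -(-1) ^ (j.choose (2 ^ k)) := by
  have hmod : (j + 2 ^ k).choose (2 ^ k) % 2 = (j.choose (2 ^ k) + 1) % 2 := by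
    rw [← ZMod.natCast_eq_natCast_iff', Nat.choose_add_prime_pow_self, Nat.cast_add, Nat.cast_one]
  rw [neg_one_pow_eq_pow_mod_two, hmod, ← neg_one_pow_eq_pow_mod_two, pow_succ, mul_neg_one]

theorem stmt_16_general (k : ℕ)
    (a : ℕ → ℤ)
    (ha : ∀ n : ℕ, a n = ∑ j ∈ Finset.range (n + 1),
      (n.choose j : ℤ) * (-1 : ℤ) ^ (j.choose (2 ^ k))) :
    (∀ n : ℕ, ∑ ν ∈ Finset.range (2 ^ k + 1),
        (-1 : ℤ) ^ ν * ((2 ^ k).choose ν : ℤ) * a (n + 2 ^ k - ν) = -a n) ∧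
    (∀ n : ℕ, n ≤ 2 ^ k - 1 → a n = 2 ^ n) := by
  have ha' : a = binomialTransform fun j ↦ (-1 : ℤ) ^ j.choose (2 ^ k) := funext ha
  refine ⟨fun n ↦ ?_, fun n hn ↦ ?_⟩
  · rw [← fwdDiff_iter_eq_sum_reflect, ha', fwdDiff_iter_binomialTransform, binomialTransform,
      binomialTransform, ← sum_neg_distrib]
    simp only [neg_one_pow_choose_add_two_pow, mul_neg]
  · have hsmall : ∀ j ∈ range (n + 1), j.choose (2 ^ k) = 0 := fun j hj ↦ by
      have := Nat.one_le_two_pow (n := k)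
      exact Nat.choose_eq_zero_of_lt (by rw [mem_range] at hj; omega)
    rw [ha, sum_congr rfl fun j hj ↦ by rw [hsmall j hj, pow_zero, mul_one]]
    exact_mod_cast Nat.sum_range_choose n

theorem stmt_16 (k : ℕ) (hk : 1 ≤ k)
    (a : ℕ → ℤ)
    (ha : ∀ n : ℕ, a n = ∑ j ∈ Finset.range (n + 1),
      (n.choose j : ℤ) * (-1 : ℤ) ^ (j.choose (2 ^ k))) :
    (∀ n : ℕ, ∑ ν ∈ Finset.range (2 ^ k + 1),
        (-1 : ℤ) ^ ν * ((2 ^ k).choose ν : ℤ) * a (n + 2 ^ k - ν) = -a n) ∧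
    (∀ n : ℕ, n ≤ 2 ^ k - 1 → a n = 2 ^ n) :=
  stmt_16_general k a ha
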